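/- arXiv:0901.1587 — 2 statements merged into one kernel-verified Lean document; each statement's English description precedes it below -/
import Mathlib

section
/- For every d ≥ 1 there exist only finitely many perfect positive definite quadratic forms in d variables up to arithmetical equivalence and scaling: there are perfect forms Q_1, …, Q_n with λ(Q_i) = 1 such that every perfect form Q with λ(Q) = 1 satisfies Q = UᵗQ_iU for some i and some U ∈ GL_d(ℤ). -/
open Matrix

/-- The real vector corresponding to an integral vector. -/
def castVec {d : ℕ} (x : Fin d → ℤ) : Fin d → ℝ := fun i => (x i : ℝ)

/-- Evaluation `Q[x] = xᵗ Q x` of a quadratic form at an integral vector. -/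
def qeval {d : ℕ} (Q : Matrix (Fin d) (Fin d) ℝ) (x : Fin d → ℤ) : ℝ :=
  castVec x ⬝ᵥ Q.mulVec (castVec x)

/-- The real matrix corresponding to an integral matrix. -/
def castMat {d : ℕ} (U : Matrix (Fin d) (Fin d) ℤ) : Matrix (Fin d) (Fin d) ℝ :=
  U.map fun z => (z : ℝ)

/-- `Q` is a perfect positive definite quadratic form with arithmetical minimum
`lam`: it is positive definite, `lam` is the least value of `Q` on nonzero
integral vectors, and `Q` is the unique symmetric matrix taking the value `lam`
on all of `Min Q`. -/
def IsPerfect {d : ℕ} (Q : Matrix (Fin d) (Fin d) ℝ) (lam : ℝ) : Prop :=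
  Q.PosDef ∧ IsLeast {r : ℝ | ∃ x : Fin d → ℤ, x ≠ 0 ∧ qeval Q x = r} lam ∧
    ∀ Q' : Matrix (Fin d) (Fin d) ℝ, Q'.IsSymm →
      (∀ x : Fin d → ℤ, qeval Q x = lam → qeval Q' x = lam) → Q' = Q

/-!
The minimal vectors of a perfect form `Q` span `ℝ^d` (if all of them were orthogonal to some
`v ≠ 0`, then `Q + v vᵀ` would contradict perfection), so some `d` of them form the columns of an
integral matrix `X` with `det X ≠ 0`. The lattice `{v | X v ∈ m ℤ^d}` contains `m ℤ^d`, hence has a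
basis with entries in `[-m, m]` (a Hermite normal form argument); this gives a unimodular `U` and an
integral `H` with `|H| ≤ m` and `X H = m U`. Then `m² UᵀQU = Hᵀ (XᵀQX) H`, and the Gram matrix
`XᵀQX` of minimal vectors has entries in `[-1, 1]`, so the entries of the perfect form `UᵀQU` are
at most `d²`. Minkowski's convex body theorem bounds `det (UᵀQU)` from below, so the minimal vectors
of `UᵀQU` lie in a fixed finite box. A perfect form is determined by its minimal vectors, so only
finitely many forms `UᵀQU` arise.
-/

lemma abs_mul_apply_le {R : Type*} [CommRing R] [LinearOrder R] [IsStrictOrderedRing R]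
    {l m n : Type*} [Fintype m] {A : Matrix l m R} {B : Matrix m n R} {a b : R}
    (hA : ∀ i j, |A i j| ≤ a) (hB : ∀ i j, |B i j| ≤ b) (i : l) (k : n) :
    |(A * B) i k| ≤ Fintype.card m * (a * b) := by
  calc |(A * B) i k| ≤ ∑ j, |A i j * B j k| := Finset.abs_sum_le_sum_abs _ _
    _ ≤ ∑ _j : m, a * b := Finset.sum_le_sum fun j _ => by
        rw [abs_mul]
        exact mul_le_mul (hA i j) (hB j k) (abs_nonneg _) ((abs_nonneg _).trans (hA i j))
    _ = Fintype.card m * (a * b) := by simp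

lemma Matrix.col_mul {l m n R : Type*} [Fintype m] [NonUnitalNonAssocSemiring R]
    (A : Matrix l m R) (B : Matrix m n R) (j : n) : (A * B).col j = A *ᵥ B.col j :=
  rfl

lemma Matrix.PosSemidef.sq_apply_le {ι : Type*} {G : Matrix ι ι ℝ}
    (hG : G.PosSemidef) (p q : ι) : G p q ^ 2 ≤ G p p * G q q := by
  classical
  have hdet := (hG.submatrix ![p, q]).det_nonneg
  have hsymm : G q p = G p q := by simpa using hG.isHermitian.apply p q
  simp only [det_fin_two, submatrix_apply, Matrix.cons_val_zero, Matrix.cons_val_one] at hdet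
  rw [hsymm, ← sq] at hdet
  linarith

section MatrixInequalities

variable {n : Type*} [Fintype n]

lemma sq_le_dotProduct_self (v : n → ℝ) (j : n) : v j ^ 2 ≤ v ⬝ᵥ v := by
  rw [sq]
  exact Finset.single_le_sum (f := fun i => v i * v i) (fun i _ => mul_self_nonneg _)
    (Finset.mem_univ j)

lemma Matrix.transpose_mul_mul_apply {m : Type*} [Fintype m] (B : Matrix n m ℝ)
    (Q : Matrix n n ℝ) (k l : m) : (Bᵀ * Q * B) k l = B.col k ⬝ᵥ Q *ᵥ B.col l := by
  simp only [mul_apply, transpose_apply, dotProduct, mulVec, col_apply, Finset.sum_mul,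
    Finset.mul_sum]
  rw [Finset.sum_comm]
  simp only [mul_comm, mul_left_comm]

lemma Matrix.PosSemidef.dotProduct_mulVec_sq_le {Q : Matrix n n ℝ} (hQ : Q.PosSemidef)
    (u v : n → ℝ) : (u ⬝ᵥ Q *ᵥ v) ^ 2 ≤ (u ⬝ᵥ Q *ᵥ u) * (v ⬝ᵥ Q *ᵥ v) := by
  have := (hQ.conjTranspose_mul_mul_same (of ![u, v])ᵀ).sq_apply_le 0 1
  simpa only [conjTranspose_eq_transpose_of_trivial, transpose_mul_mul_apply, of_col,
    cons_val_zero, cons_val_one] using this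

lemma abs_dotProduct_mulVec_le {M : Matrix n n ℝ} {a : ℝ} (hM : ∀ i j, |M i j| ≤ a)
    (x : n → ℝ) : |x ⬝ᵥ M *ᵥ x| ≤ Fintype.card n * a * (x ⬝ᵥ x) := by
  calc |x ⬝ᵥ M *ᵥ x| = |∑ i, ∑ j, x i * M i j * x j| := by
        simp only [dotProduct, mulVec, Finset.mul_sum, mul_assoc]
    _ ≤ ∑ i, ∑ j, a * ((x i ^ 2 + x j ^ 2) / 2) := by
        refine (Finset.abs_sum_le_sum_abs _ _).trans (Finset.sum_le_sum fun i _ =>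
          (Finset.abs_sum_le_sum_abs _ _).trans (Finset.sum_le_sum fun j _ => ?_))
        rw [show x i * M i j * x j = M i j * (x i * x j) by ring, abs_mul]
        have h2 : |x i * x j| ≤ (x i ^ 2 + x j ^ 2) / 2 := by
          rw [abs_le]
          constructor <;> nlinarith [sq_nonneg (x i + x j), sq_nonneg (x i - x j)]
        exact mul_le_mul (hM i j) h2 (abs_nonneg _) ((abs_nonneg _).trans (hM i j))
    _ = Fintype.card n * a * (x ⬝ᵥ x) := by
        simp only [dotProduct, ← sq, mul_add, add_div, Finset.sum_add_distrib, ← Finset.mul_sum,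
          ← Finset.sum_div]
        rw [Finset.sum_comm (f := fun _ j => x j ^ 2)]
        simp only [Finset.sum_const, Finset.card_univ, nsmul_eq_mul, ← Finset.mul_sum]
        ring

variable [DecidableEq n]

lemma abs_adjugate_apply_le {Q : Matrix n n ℝ} {b : ℝ} (hb : 1 ≤ b) (hQ : ∀ i j, |Q i j| ≤ b)
    (i j : n) : |Q.adjugate i j| ≤ (Fintype.card n).factorial * b ^ Fintype.card n := by
  rw [adjugate_apply]
  refine (det_le (abv := AbsoluteValue.abs) (x := b) fun p q => ?_).trans_eq (by simp)
  rcases eq_or_ne p j with rfl | hp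
  · rw [updateRow_self, Pi.single_apply]
    split_ifs <;> simp only [AbsoluteValue.map_one, AbsoluteValue.map_zero] <;> linarith
  · rw [updateRow_ne hp]
    exact hQ p q

lemma det_mul_dotProduct_self_le {Q : Matrix n n ℝ} (hQ : Q.PosDef) {a : ℝ}
    (hadj : ∀ i j, |Q.adjugate i j| ≤ a) (x : n → ℝ) :
    Q.det * (x ⬝ᵥ x) ≤ Fintype.card n * a * (x ⬝ᵥ Q *ᵥ x) := by
  rcases eq_or_ne x 0 with rfl | hx
  · simp
  -- Cauchy–Schwarz for `Q` applied to `x` and `adj Q x = det Q • Q⁻¹ x`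
  have hcs := hQ.posSemidef.dotProduct_mulVec_sq_le x (Q.adjugate *ᵥ x)
  rw [mulVec_mulVec, mul_adjugate, smul_mulVec, one_mulVec, dotProduct_smul, dotProduct_smul,
    smul_eq_mul, smul_eq_mul, dotProduct_comm (Q.adjugate *ᵥ x) x] at hcs
  have hadjx := (le_abs_self _).trans (abs_dotProduct_mulVec_le hadj x)
  have hdet := hQ.det_pos
  have hxx : 0 < x ⬝ᵥ x := by simpa using dotProduct_self_star_pos_iff.mpr hx
  have hQx : 0 ≤ x ⬝ᵥ Q *ᵥ x := by simpa using hQ.posSemidef.dotProduct_mulVec_nonneg x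
  refine le_of_mul_le_mul_left ?_ (mul_pos hdet hxx)
  nlinarith [mul_le_mul_of_nonneg_left hadjx (mul_nonneg hQx hdet.le)]

end MatrixInequalities

section Lattice

lemma exists_mem_abs_le_dvd_apply {ι : Type*} [DecidableEq ι] {Λ : Submodule ℤ (ι → ℤ)}
    {m : ℤ} (hm : 0 < m) (hΛ : ∀ v, m • v ∈ Λ) (k : ι) :
    ∃ g ∈ Λ, (∀ j, |g j| ≤ m) ∧ ∀ v ∈ Λ, g k ∣ v k := by
  set I : Ideal ℤ := Λ.map (LinearMap.proj k)
  set a := Submodule.IsPrincipal.generator I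
  obtain ⟨g₀, hg₀, hg₀k⟩ := Submodule.mem_map.mp (Submodule.IsPrincipal.generator_mem I)
  have hdvd : ∀ v ∈ Λ, a ∣ v k := fun v hv =>
    (Submodule.IsPrincipal.mem_iff_generator_dvd I).mp (Submodule.mem_map_of_mem hv)
  have ham : |a| ≤ m :=
    Int.le_of_dvd hm ((abs_dvd a m).mpr (by simpa using hdvd _ (hΛ (Pi.single k 1))))
  -- subtracting a vector of `m ℤ^ι` reduces all coordinates but the `k`-th modulo `m`
  set q : ι → ℤ := fun j => if j = k then 0 else g₀ j / m
  have hgk : (g₀ - m • q) k = a := by simpa [q] using hg₀k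
  refine ⟨g₀ - m • q, Λ.sub_mem hg₀ (hΛ q), fun j => ?_, fun v hv => hgk ▸ hdvd v hv⟩
  by_cases hj : j = k
  · rwa [hj, hgk]
  · have h : (g₀ - m • q) j = g₀ j % m := by simp [q, hj, Int.emod_def]
    rw [h, abs_of_nonneg (Int.emod_nonneg _ hm.ne')]
    exact (Int.emod_lt_of_pos _ hm).le

lemma exists_span_range_eq_abs_le {n : ℕ} (Λ : Submodule ℤ (Fin n → ℤ)) {m : ℤ}
    (hm : 0 < m) (hΛ : ∀ v, m • v ∈ Λ) :
    ∃ h : Fin n → Fin n → ℤ, Submodule.span ℤ (Set.range h) = Λ ∧ ∀ i j, |h i j| ≤ m := by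
  induction n with
  | zero => exact ⟨Fin.elim0, by simp [Submodule.eq_bot_of_subsingleton], fun i => i.elim0⟩
  | succ n ih =>
    obtain ⟨g, hgΛ, hg, hdvd⟩ := exists_mem_abs_le_dvd_apply hm hΛ 0
    let ι : (Fin n → ℤ) →ₗ[ℤ] (Fin (n + 1) → ℤ) :=
      (Fin.consLinearEquiv ℤ fun _ => ℤ).toLinearMap ∘ₗ LinearMap.inr ℤ ℤ (Fin n → ℤ)
    have hι : ∀ w, ι w = Fin.cons 0 w := fun w => rfl
    obtain ⟨h, hspan, hh⟩ := ih (Λ.comap ι) fun w => by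
      simpa only [Submodule.mem_comap, map_smul] using hΛ (ι w)
    refine ⟨Fin.cons g (ι ∘ h), le_antisymm ?_ fun v hv => ?_, fun i => ?_⟩
    · rw [Submodule.span_le]
      rintro _ ⟨i, rfl⟩
      cases i using Fin.cases with
      | zero => simpa using hgΛ
      | succ i =>
        have : h i ∈ Λ.comap ι := hspan ▸ Submodule.subset_span (Set.mem_range_self i)
        simpa using this
    · obtain ⟨c, hc⟩ := hdvd v hv
      set S := Submodule.span ℤ (Set.range (Fin.cons g (ι ∘ h) : Fin (n + 1) → Fin (n + 1) → ℤ))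
      -- `v - c • g` vanishes at `0`, so it comes from the lattice one dimension down
      have hw : v - c • g = ι (Fin.tail (v - c • g)) := by
        rw [hι, ← Fin.cons_self_tail (v - c • g)]
        simp [hc, mul_comm]
      have htail : Fin.tail (v - c • g) ∈ Submodule.span ℤ (Set.range h) :=
        hspan ▸ show ι _ ∈ Λ from hw ▸ Λ.sub_mem hv (Λ.smul_mem c hgΛ)
      have hwS : v - c • g ∈ S := by
        have := Submodule.mem_map_of_mem (f := ι) htail
        rw [Submodule.map_span, ← Set.range_comp] at this
        refine hw ▸ Submodule.span_mono ?_ this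
        rintro _ ⟨i, rfl⟩
        exact ⟨i.succ, by simp⟩
      have hgS : g ∈ S := Submodule.subset_span ⟨0, by simp⟩
      simpa using S.add_mem hwS (S.smul_mem c hgS)
    · cases i using Fin.cases with
      | zero => simpa using hg
      | succ i =>
        intro j
        cases j using Fin.cases with
        | zero => simpa [hι] using hm.le
        | succ j => simpa [hι] using hh i j

lemma exists_mul_eq_smul_of_det_ne_zero {d : ℕ} {X : Matrix (Fin d) (Fin d) ℤ} (hX : X.det ≠ 0) :
    ∃ (U W H : Matrix (Fin d) (Fin d) ℤ) (m : ℤ),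
      0 < m ∧ U * W = 1 ∧ (∀ i j, |H i j| ≤ m) ∧ X * H = m • U := by
  set m := X.det ^ 2
  have hm : 0 < m := by positivity
  set A := X.det • X.adjugate
  have hAX : A * X = m • 1 := by rw [smul_mul, adjugate_mul, smul_smul, ← sq]
  have hXA : X * A = m • 1 := by rw [Matrix.mul_smul, mul_adjugate, smul_smul, ← sq]
  set Λ := LinearMap.range A.mulVecLin
  obtain ⟨h, hspan, hh⟩ := exists_span_range_eq_abs_le Λ hm fun v =>
    ⟨X *ᵥ v, by simp [mulVec_mulVec, hAX]⟩
  have hu : ∀ i, ∃ u, A *ᵥ u = h i := fun i =>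
    LinearMap.mem_range.mp (hspan ▸ Submodule.subset_span (Set.mem_range_self i))
  have hc : ∀ k, ∃ c : Fin d → ℤ, ∑ i, c i • h i = A.col k := fun k =>
    Submodule.mem_span_range_iff_exists_fun ℤ |>.mp (hspan ▸ ⟨Pi.single k 1, mulVec_single_one A k⟩)
  choose u hu using hu
  choose c hc using hc
  set U := (of u)ᵀ
  set H := (of h)ᵀ
  set W := (of c)ᵀ
  have hAU : A * U = H := ext_col fun i => by rw [col_mul, of_col, of_col, hu]
  have hHW : H * W = A := ext_col fun k => by
    rw [col_mul, of_col, ← hc, mulVec_transpose, vecMul_eq_sum]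
    rfl
  have hXH : X * H = m • U := by rw [← hAU, ← Matrix.mul_assoc, hXA, smul_mul, Matrix.one_mul]
  refine ⟨U, W, H, m, hm, smul_right_injective _ hm.ne' ?_, fun i j => hh j i, hXH⟩
  change m • (U * W) = m • 1
  rw [← smul_mul, ← hXH, Matrix.mul_assoc, hHW, hXA]

end Lattice

section Cast

variable {d : ℕ}

lemma castMat_mul (A B : Matrix (Fin d) (Fin d) ℤ) :
    castMat (A * B) = castMat A * castMat B :=
  Matrix.map_mul (f := Int.castRingHom ℝ)

lemma castMat_one : castMat (1 : Matrix (Fin d) (Fin d) ℤ) = 1 :=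
  Matrix.map_one _ Int.cast_zero Int.cast_one

lemma castMat_smul (m : ℤ) (A : Matrix (Fin d) (Fin d) ℤ) :
    castMat (m • A) = (m : ℝ) • castMat A := by
  ext i j
  simp only [castMat, map_apply, Matrix.smul_apply, smul_eq_mul, Int.cast_mul]

lemma castMat_det (A : Matrix (Fin d) (Fin d) ℤ) : (castMat A).det = A.det :=
  ((Int.castRingHom ℝ).map_det A).symm

lemma castMat_mul_eq_one {U W : Matrix (Fin d) (Fin d) ℤ} (h : U * W = 1) :
    castMat U * castMat W = 1 := by
  rw [← castMat_mul, h, castMat_one]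

lemma castMat_conj_conj {U W : Matrix (Fin d) (Fin d) ℤ} (hUW : U * W = 1)
    (Q : Matrix (Fin d) (Fin d) ℝ) :
    (castMat W)ᵀ * ((castMat U)ᵀ * Q * castMat U) * castMat W = Q := by
  rw [show (castMat W)ᵀ * ((castMat U)ᵀ * Q * castMat U) * castMat W =
      (castMat U * castMat W)ᵀ * Q * (castMat U * castMat W) by
    simp only [transpose_mul, Matrix.mul_assoc], castMat_mul_eq_one hUW, transpose_one,
    Matrix.one_mul, Matrix.mul_one]

lemma castVec_mulVec (U : Matrix (Fin d) (Fin d) ℤ) (x : Fin d → ℤ) :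
    castVec (U *ᵥ x) = castMat U *ᵥ castVec x := by
  ext i
  simp [castVec, castMat, mulVec, dotProduct]

lemma qeval_conj (Q : Matrix (Fin d) (Fin d) ℝ) (U : Matrix (Fin d) (Fin d) ℤ)
    (x : Fin d → ℤ) :
    qeval ((castMat U)ᵀ * Q * castMat U) x = qeval Q (U *ᵥ x) := by
  rw [qeval, qeval, castVec_mulVec, ← mulVec_mulVec, ← mulVec_mulVec, dotProduct_mulVec,
    vecMul_transpose]

lemma qeval_single (Q : Matrix (Fin d) (Fin d) ℝ) (j : Fin d) :
    qeval Q (Pi.single j 1) = Q j j := by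
  have : castVec (Pi.single j 1 : Fin d → ℤ) = Pi.single j 1 := by
    ext i
    by_cases h : i = j <;> simp [castVec, h]
  rw [qeval, this, mulVec_single_one, single_dotProduct, one_mul, col_apply]

lemma abs_castMat_apply_le {H : Matrix (Fin d) (Fin d) ℤ} {m : ℤ} (hH : ∀ i j, |H i j| ≤ m)
    (i j : Fin d) : |castMat H i j| ≤ m := by
  simpa [castMat, ← Int.cast_abs] using hH i j

lemma finite_setOf_dotProduct_le (R : ℝ) :
    {x : Fin d → ℤ | castVec x ⬝ᵥ castVec x ≤ R}.Finite := by
  refine (Set.Finite.pi (t := fun _ => Set.Icc (-⌈R⌉) ⌈R⌉) fun _ => Set.finite_Icc _ _).subset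
    fun x hx j _ => ?_
  have hj : ((x j ^ 2 : ℤ) : ℝ) ≤ R := by
    push_cast
    exact (sq_le_dotProduct_self (castVec x) j).trans hx
  rw [Set.mem_Icc, ← abs_le]
  exact (Int.natCast_natAbs (x j) ▸ Int.natAbs_le_self_sq (x j)).trans
    (Int.cast_le.mp (hj.trans (Int.le_ceil R)))

end Cast

section Minkowski

open MeasureTheory

variable {d : ℕ}

lemma convex_dotProduct_self_lt_one : Convex ℝ {w : Fin d → ℝ | w ⬝ᵥ w < 1} := by
  have : {w : Fin d → ℝ | w ⬝ᵥ w < 1} =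
      (WithLp.linearEquiv 2 ℝ (Fin d → ℝ)).symm ⁻¹'
        Metric.ball (0 : EuclideanSpace ℝ (Fin d)) 1 := by
    ext w
    rw [Set.mem_preimage, mem_ball_zero_iff, EuclideanSpace.norm_eq, Real.sqrt_lt' one_pos]
    simp [dotProduct, sq]
  rw [this]
  exact (convex_ball 0 1).linear_preimage _

lemma isBounded_dotProduct_self_lt_one :
    Bornology.IsBounded {w : Fin d → ℝ | w ⬝ᵥ w < 1} := by
  refine (Metric.isBounded_closedBall (x := 0) (r := 1)).subset fun w hw => ?_
  rw [mem_closedBall_zero_iff, pi_norm_le_iff_of_nonneg zero_le_one]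
  intro i
  rw [Real.norm_eq_abs, ← sq_le_one_iff_abs_le_one]
  exact (sq_le_dotProduct_self w i).trans hw.le

lemma volume_dotProduct_self_lt_one_pos :
    0 < (volume {w : Fin d → ℝ | w ⬝ᵥ w < 1}).toReal :=
  ENNReal.toReal_pos (isOpen_lt (by fun_prop) continuous_const |>.measure_pos volume
    ⟨0, by simp⟩).ne' isBounded_dotProduct_self_lt_one.measure_lt_top.ne

noncomputable def minkowskiConst (d : ℕ) : ℝ :=
  ((volume {w : Fin d → ℝ | w ⬝ᵥ w < 1}).toReal / 2 ^ d) ^ 2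

lemma minkowskiConst_pos : 0 < minkowskiConst d := by
  have := volume_dotProduct_self_lt_one_pos (d := d)
  unfold minkowskiConst
  positivity

lemma exists_ne_zero_castVec_mem {s : Set (Fin d → ℝ)} (hsymm : ∀ v ∈ s, -v ∈ s)
    (hconv : Convex ℝ s) (hvol : 2 ^ d < volume s) : ∃ y : Fin d → ℤ, y ≠ 0 ∧ castVec y ∈ s := by
  have hcube : volume (ZSpan.fundamentalDomain (Pi.basisFun ℝ (Fin d))) = 1 := by
    simp [ZSpan.fundamentalDomain_pi_basisFun, Real.volume_pi_Ico]
  have : Countable (Submodule.span ℤ (Set.range (Pi.basisFun ℝ (Fin d)))).toAddSubgroup :=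
    inferInstanceAs (Countable (Submodule.span ℤ _))
  obtain ⟨⟨x, hxL⟩, hx0, hxs⟩ := exists_ne_zero_mem_lattice_of_measure_mul_two_pow_lt_measure
    (ZSpan.isAddFundamentalDomain' (Pi.basisFun ℝ (Fin d)) volume) hsymm hconv
    (by rwa [hcube, one_mul, Module.finrank_fin_fun])
  choose y hy using ((Pi.basisFun ℝ (Fin d)).mem_span_iff_repr_mem ℤ x).mp hxL
  obtain rfl : castVec y = x := funext hy
  exact ⟨y, by rintro rfl; exact hx0 (Subtype.ext (funext fun i => by simp [castVec])), hxs⟩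

open scoped MatrixOrder in
lemma minkowskiConst_le_det {Q : Matrix (Fin d) (Fin d) ℝ} (hQ : Q.PosDef)
    (hmin : ∀ x : Fin d → ℤ, x ≠ 0 → 1 ≤ qeval Q x) : minkowskiConst d ≤ Q.det := by
  obtain ⟨B, rfl⟩ := CStarAlgebra.nonneg_iff_eq_star_mul_self.mp hQ.posSemidef.nonneg
  have hdet : (star B * B).det = B.det ^ 2 := by
    rw [det_mul, star_eq_conjTranspose, det_conjTranspose, star_trivial, sq]
  have hB : 0 < |B.det| := abs_pos.mpr fun h => hQ.det_pos.ne' (by rw [hdet, h, sq, zero_mul])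
  set s₀ := {w : Fin d → ℝ | w ⬝ᵥ w < 1}
  rw [minkowskiConst, hdet, ← sq_abs B.det, sq_le_sq₀ (by positivity) (abs_nonneg _)]
  by_contra! hlt
  -- `Q = Bᵀ B`, so the ellipsoid `Q[v] < 1` is the preimage of the unit ball under `B`
  have hvol : 2 ^ d < volume (Matrix.toLin' B ⁻¹' s₀) := by
    rw [Measure.addHaar_preimage_linearMap _ (by simpa using hB.ne'), LinearMap.det_toLin',
      ← ENNReal.ofReal_toReal isBounded_dotProduct_self_lt_one.measure_lt_top.ne,
      ← ENNReal.ofReal_mul (by positivity), ← ENNReal.ofReal_ofNat 2,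
      ← ENNReal.ofReal_pow zero_le_two, ENNReal.ofReal_lt_ofReal_iff_of_nonneg (by positivity),
      abs_inv, inv_mul_eq_div, lt_div_iff₀ hB]
    rwa [lt_div_iff₀ (by positivity), mul_comm] at hlt
  obtain ⟨y, hy, hys⟩ := exists_ne_zero_castVec_mem (fun v hv => by simpa [s₀, mulVec_neg] using hv)
    (convex_dotProduct_self_lt_one.linear_preimage _) hvol
  refine (hmin y hy).not_gt ?_
  rw [qeval, ← mulVec_mulVec, dotProduct_mulVec, star_eq_conjTranspose,
    conjTranspose_eq_transpose_of_trivial, vecMul_transpose]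
  exact hys

end Minkowski

section Perfect

variable {d : ℕ} {Q : Matrix (Fin d) (Fin d) ℝ} {lam : ℝ}

lemma IsPerfect.isSymm (hQ : IsPerfect Q lam) : Q.IsSymm :=
  isHermitian_iff_isSymm.mp hQ.1.isHermitian

lemma IsPerfect.conj {U W : Matrix (Fin d) (Fin d) ℤ} (hQ : IsPerfect Q lam)
    (hUW : U * W = 1) : IsPerfect ((castMat U)ᵀ * Q * castMat U) lam := by
  obtain ⟨hpd, hleast, huniq⟩ := hQ
  have hWU : W * U = 1 := mul_eq_one_comm.mp hUW
  have hUW_x : ∀ x, U *ᵥ (W *ᵥ x) = x := fun x => by rw [mulVec_mulVec, hUW, one_mulVec]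
  have hWU_x : ∀ x, W *ᵥ (U *ᵥ x) = x := fun x => by rw [mulVec_mulVec, hWU, one_mulVec]
  refine ⟨?_, ?_, fun Q' hQ' hagree => ?_⟩
  · have hinj : Function.Injective (castMat U *ᵥ ·) :=
      Function.LeftInverse.injective (g := (castMat W *ᵥ ·)) fun x => by
        dsimp only
        rw [mulVec_mulVec, castMat_mul_eq_one hWU, one_mulVec]
    simpa only [conjTranspose_eq_transpose_of_trivial] using
      hpd.conjTranspose_mul_mul_same hinj
  · convert hleast using 1
    ext r
    constructor
    · rintro ⟨x, hx, rfl⟩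
      exact ⟨U *ᵥ x, fun h => hx (by rw [← hWU_x x, h, mulVec_zero]), (qeval_conj Q U x).symm⟩
    · rintro ⟨y, hy, rfl⟩
      exact ⟨W *ᵥ y, fun h => hy (by rw [← hUW_x y, h, mulVec_zero]), by
        rw [qeval_conj, hUW_x]⟩
  · have hQ'W : (castMat W)ᵀ * Q' * castMat W = Q := by
      refine huniq _ ?_ fun y hy => ?_
      · simp only [IsSymm, transpose_mul, transpose_transpose, hQ'.eq, Matrix.mul_assoc]
      · rw [qeval_conj]
        exact hagree _ (by rw [qeval_conj, hUW_x]; exact hy)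
    rw [← hQ'W, castMat_conj_conj hWU]

lemma IsPerfect.span_minVectors (hQ : IsPerfect Q lam) :
    Submodule.span ℝ (castVec '' {x | qeval Q x = lam}) = ⊤ := by
  by_contra hne
  obtain ⟨f, hf0, hf⟩ :=
    Submodule.exists_dual_map_eq_bot_of_lt_top (lt_top_iff_ne_top.mpr hne) inferInstance
  set v : Fin d → ℝ := fun i => f fun j => if i = j then 1 else 0
  have hfv : ∀ w, f w = w ⬝ᵥ v := fun w => LinearMap.pi_apply_eq_sum_univ f w
  have hv : v ≠ 0 := fun hv => hf0 (LinearMap.ext fun w => by simp [hfv, hv])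
  -- the minimal vectors are orthogonal to `v`, so `Q + v vᵀ` agrees with `Q` on them
  have hQv : Q + vecMulVec v v = Q := by
    refine hQ.2.2 _ (hQ.isSymm.add ?_) fun x hx => ?_
    · ext i j
      simp [vecMulVec_apply, mul_comm]
    · have hxv : castVec x ⬝ᵥ v = 0 := by
        rw [← hfv, ← LinearMap.mem_ker]
        exact LinearMap.le_ker_iff_map.mpr hf (Submodule.subset_span ⟨x, hx, rfl⟩)
      rw [qeval, add_mulVec, dotProduct_add, ← qeval, hx, vecMulVec_mulVec, dotProduct_comm v,
        hxv]
      simp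
  exact hv (by simpa using hQv)

lemma IsPerfect.exists_minVectors_det_ne_zero (hQ : IsPerfect Q lam) :
    ∃ X : Matrix (Fin d) (Fin d) ℤ, X.det ≠ 0 ∧ ∀ j, qeval Q (X.col j) = lam := by
  have hspan := hQ.span_minVectors
  let b₀ := Module.Basis.ofSpan hspan.ge
  let b := b₀.reindex (b₀.indexEquiv (Pi.basisFun ℝ (Fin d)))
  have hb : ∀ j, b j ∈ castVec '' {x | qeval Q x = lam} := fun j =>
    Module.Basis.ofSpan_subset hspan.ge ⟨_, (b₀.reindex_apply _ j).symm⟩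
  choose y hy hyb using hb
  refine ⟨(of y)ᵀ, fun hdet => ?_, hy⟩
  have hunit : IsUnit (castMat (of y)ᵀ) := by
    rw [← linearIndependent_cols_iff_isUnit]
    rw [show (castMat (of y)ᵀ).col = b from funext hyb]
    exact b.linearIndependent
  rw [isUnit_iff_isUnit_det, castMat_det, hdet] at hunit
  simp at hunit

lemma finite_setOf_isPerfect_minVectors_subset {S : Set (Fin d → ℤ)} (hS : S.Finite) (lam : ℝ) :
    {Q : Matrix (Fin d) (Fin d) ℝ | IsPerfect Q lam ∧ {x | qeval Q x = lam} ⊆ S}.Finite := by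
  refine Set.Finite.of_finite_image (f := fun Q => {x | qeval Q x = lam})
    (hS.finite_subsets.subset ?_) fun Q₁ hQ₁ Q₂ hQ₂ h => ?_
  · rintro _ ⟨Q, hQ, rfl⟩
    exact hQ.2
  · exact (hQ₁.1.2.2 Q₂ hQ₂.1.isSymm fun x hx => (Set.ext_iff.mp h x).mp hx).symm

end Perfect

section Reduction

variable {d : ℕ}

lemma abs_conj_apply_le_sq {Q : Matrix (Fin d) (Fin d) ℝ} (hQ : Q.PosSemidef)
    {X H U : Matrix (Fin d) (Fin d) ℤ} {m : ℤ} (hm : 0 < m) (hXH : X * H = m • U)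
    (hH : ∀ i j, |H i j| ≤ m) (hX : ∀ j, qeval Q (X.col j) = 1) (j k : Fin d) :
    |((castMat U)ᵀ * Q * castMat U) j k| ≤ d ^ 2 := by
  obtain ⟨G, hGdef⟩ : ∃ G, G = (castMat X)ᵀ * Q * castMat X := ⟨_, rfl⟩
  have hGdiag : ∀ p, G p p = 1 := fun p => by
    rw [← qeval_single G p, hGdef, qeval_conj, mulVec_single_one, hX]
  have hG : ∀ p q, |G p q| ≤ 1 := fun p q => by
    have := (hQ.conjTranspose_mul_mul_same (castMat X)).sq_apply_le p q
    rw [conjTranspose_eq_transpose_of_trivial, ← hGdef, hGdiag, hGdiag, one_mul] at this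
    exact sq_le_one_iff_abs_le_one _ |>.mp this
  have hconj : ((m : ℝ) ^ 2) • ((castMat U)ᵀ * Q * castMat U) = (castMat H)ᵀ * G * castMat H := by
    have hXH' : castMat X * castMat H = (m : ℝ) • castMat U := by
      rw [← castMat_mul, hXH, castMat_smul]
    calc ((m : ℝ) ^ 2) • ((castMat U)ᵀ * Q * castMat U)
        = (castMat X * castMat H)ᵀ * Q * (castMat X * castMat H) := by
          rw [hXH', transpose_smul, smul_mul, Matrix.mul_smul, smul_mul, smul_smul, sq]
      _ = (castMat H)ᵀ * G * castMat H := by simp only [hGdef, transpose_mul, Matrix.mul_assoc]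
  have hbound := abs_mul_apply_le
    (abs_mul_apply_le (A := (castMat H)ᵀ) (fun p q => abs_castMat_apply_le hH q p) hG)
    (abs_castMat_apply_le hH) j k
  rw [← hconj, Matrix.smul_apply, smul_eq_mul, abs_mul, abs_of_pos (by positivity),
    Fintype.card_fin] at hbound
  have hm' : (0 : ℝ) < m ^ 2 := by positivity
  nlinarith

noncomputable def minVectorBound (d : ℕ) : ℝ :=
  d * (d.factorial * ((d : ℝ) ^ 2 + 1) ^ d) / minkowskiConst d

theorem IsPerfect.exists_conj_minVectors_subset {Q : Matrix (Fin d) (Fin d) ℝ}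
    (hQ : IsPerfect Q 1) :
    ∃ U W : Matrix (Fin d) (Fin d) ℤ, U * W = 1 ∧ IsPerfect ((castMat U)ᵀ * Q * castMat U) 1 ∧
      {x | qeval ((castMat U)ᵀ * Q * castMat U) x = 1} ⊆
        {x | castVec x ⬝ᵥ castVec x ≤ minVectorBound d} := by
  obtain ⟨X, hXdet, hX⟩ := hQ.exists_minVectors_det_ne_zero
  obtain ⟨U, W, H, m, hm, hUW, hH, hXH⟩ := exists_mul_eq_smul_of_det_ne_zero hXdet
  have hQ' := hQ.conj hUW
  have hentries : ∀ i j, |((castMat U)ᵀ * Q * castMat U) i j| ≤ (d : ℝ) ^ 2 + 1 := fun i j =>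
    (abs_conj_apply_le_sq hQ.1.posSemidef hm hXH hH hX i j).trans (by linarith)
  have hdet := minkowskiConst_le_det hQ'.1 fun x hx => hQ'.2.1.2 ⟨x, hx, rfl⟩
  refine ⟨U, W, hUW, hQ', fun x hx => ?_⟩
  have hx' := det_mul_dotProduct_self_le hQ'.1
    (abs_adjugate_apply_le (by nlinarith [sq_nonneg (d : ℝ)]) hentries) (castVec x)
  rw [← qeval, hx, Fintype.card_fin, mul_one] at hx'
  have hxx : 0 ≤ castVec x ⬝ᵥ castVec x := by simpa using dotProduct_self_star_nonneg (castVec x)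
  rw [Set.mem_ofPred_eq, minVectorBound, le_div_iff₀ minkowskiConst_pos]
  linarith [mul_le_mul_of_nonneg_right hdet hxx]

end Reduction

theorem stmt9_general (d : ℕ) :
    ∃ (n : ℕ) (Qs : Fin n → Matrix (Fin d) (Fin d) ℝ),
      (∀ i, IsPerfect (Qs i) 1) ∧
      ∀ Q : Matrix (Fin d) (Fin d) ℝ, IsPerfect Q 1 →
        ∃ (i : Fin n) (U : Matrix (Fin d) (Fin d) ℤ),
          (U.det = 1 ∨ U.det = -1) ∧
          Q = (castMat U)ᵀ * Qs i * castMat U := by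
  obtain ⟨n, Qs, hQs⟩ := (finite_setOf_isPerfect_minVectors_subset
    (finite_setOf_dotProduct_le (minVectorBound d)) 1).fin_embedding
  refine ⟨n, Qs, fun i => (hQs ▸ Set.mem_range_self i).1, fun Q hQ => ?_⟩
  obtain ⟨U, W, hUW, hQ'⟩ := hQ.exists_conj_minVectors_subset
  obtain ⟨i, hi⟩ : (castMat U)ᵀ * Q * castMat U ∈ Set.range Qs := hQs ▸ hQ'
  refine ⟨i, W, Int.isUnit_iff.mp (IsUnit.of_mul_eq_one_right U.det ?_), ?_⟩
  · rw [← det_mul, hUW, det_one]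
  · rw [hi, castMat_conj_conj hUW]

/-- Voronoi's finiteness theorem: for every `d ≥ 1` there are, up to arithmetical
equivalence and scaling, only finitely many perfect forms in `d` variables. -/
theorem stmt9 (d : ℕ) (hd : 1 ≤ d) :
    ∃ (n : ℕ) (Qs : Fin n → Matrix (Fin d) (Fin d) ℝ),
      (∀ i, IsPerfect (Qs i) 1) ∧
      ∀ Q : Matrix (Fin d) (Fin d) ℝ, IsPerfect Q 1 →
        ∃ (i : Fin n) (U : Matrix (Fin d) (Fin d) ℤ),
          (U.det = 1 ∨ U.det = -1) ∧
          Q = (castMat U)ᵀ * Qs i * castMat U :=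
  stmt9_general d
end

section
/- Every positive definite quadratic form Q in d variables that attains Hermite's constant, i.e. with λ(Q)/(det Q)^{1/d} = H_d, is perfect. -/
open Matrix

/-!
If `Q` is not perfect, some nonzero symmetric `T` vanishes on `Min Q`. For small `s` the forms
`Q ± s T` are still positive definite and, since the values of `Q` on `ℤ^d` are discrete above
`λ(Q)`, they still have arithmetical minimum `λ(Q)`. But `(Q + s T) Q⁻¹ (Q - s T) = Q - s² T Q⁻¹ T`
with `T Q⁻¹ T` positive semidefinite and nonzero, so `det (Q + s T) · det (Q - s T) < (det Q)²`:
one of `Q ± s T` has smaller determinant, hence larger Hermite invariant, than `Q`.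
-/

open Filter Topology

lemma eventually_abs_mul_lt (C : ℝ) {ε : ℝ} (hε : 0 < ε) : ∀ᶠ s in 𝓝 (0 : ℝ), |s| * C < ε :=
  ((continuous_abs.mul continuous_const).tendsto' (0 : ℝ) 0 (by simp)).eventually_lt_const hε

lemma le_of_div_rpow_le_div_rpow {a b c p : ℝ} (ha : 0 < a) (hb : 0 < b) (hc : 0 < c)
    (hp : 0 < p) (h : c / b ^ p ≤ c / a ^ p) : a ≤ b := by
  rwa [div_le_div_iff_of_pos_left hc (Real.rpow_pos_of_pos hb p) (Real.rpow_pos_of_pos ha p),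
    Real.rpow_le_rpow_iff ha.le hb.le hp] at h

lemma exists_pos_forall_add_le_of_finite {S : Set ℝ} {a b : ℝ} (ha : a ∈ lowerBounds S)
    (hab : a < b) (hfin : (S ∩ Set.Iic b).Finite) :
    ∃ δ > 0, ∀ r ∈ S, r ≠ a → a + δ ≤ r := by
  have hF : {r ∈ S | r ≤ b ∧ r ≠ a}.Finite := hfin.subset fun r hr => ⟨hr.1, hr.2.1⟩
  obtain ⟨ε, hε, hball⟩ := Metric.eventually_nhds_iff.mp
    (hF.isClosed.isOpen_compl.mem_nhds (by simp) : ∀ᶠ r in 𝓝 a, r ∉ {r ∈ S | r ≤ b ∧ r ≠ a})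
  refine ⟨min ε (b - a), lt_min hε (sub_pos.mpr hab), fun r hr hra => ?_⟩
  by_cases hrb : r ≤ b
  · have : ¬ dist r a < ε := fun h => hball h ⟨hr, hrb, hra⟩
    rw [Real.dist_eq, abs_of_nonneg (sub_nonneg.mpr (ha hr))] at this
    linarith [min_le_left ε (b - a)]
  · linarith [min_le_right ε (b - a)]

section Homogeneous

variable {E : Type*} [NormedAddCommGroup E] [NormedSpace ℝ E] {f : E → ℝ}

lemma apply_eq_norm_sq_mul_apply_inv_norm_smul (hf : ∀ (a : ℝ) v, f (a • v) = a ^ 2 * f v)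
    {v : E} (hv : v ≠ 0) : f v = ‖v‖ ^ 2 * f (‖v‖⁻¹ • v) := by
  rw [hf, ← mul_assoc, ← mul_pow, mul_inv_cancel₀ (norm_ne_zero_iff.mpr hv), one_pow, one_mul]

variable [ProperSpace E]

lemma exists_abs_le_mul_norm_sq (hcont : Continuous f)
    (hf : ∀ (a : ℝ) v, f (a • v) = a ^ 2 * f v) : ∃ K, ∀ v, |f v| ≤ K * ‖v‖ ^ 2 := by
  obtain ⟨K, hK⟩ := (isCompact_sphere (0 : E) 1).exists_bound_of_continuousOn hcont.continuousOn
  refine ⟨K, fun v => ?_⟩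
  rcases eq_or_ne v 0 with rfl | hv
  · simpa using hf 0 0
  rw [apply_eq_norm_sq_mul_apply_inv_norm_smul hf hv, abs_mul, abs_of_nonneg (by positivity),
    mul_comm]
  exact mul_le_mul_of_nonneg_right (hK _ (by simp [norm_smul, hv])) (by positivity)

lemma exists_pos_mul_norm_sq_le (hcont : Continuous f)
    (hf : ∀ (a : ℝ) v, f (a • v) = a ^ 2 * f v) (hpos : ∀ v, v ≠ 0 → 0 < f v) :
    ∃ c > 0, ∀ v, c * ‖v‖ ^ 2 ≤ f v := by
  have hf0 : f 0 = 0 := by simpa using hf 0 0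
  rcases subsingleton_or_nontrivial E with hE | hE
  · exact ⟨1, one_pos, fun v => by simp [Subsingleton.elim v 0, hf0]⟩
  obtain ⟨u, hu, hmin⟩ := (isCompact_sphere (0 : E) 1).exists_isMinOn
    (NormedSpace.sphere_nonempty.mpr zero_le_one) hcont.continuousOn
  refine ⟨f u, hpos u (ne_zero_of_mem_unit_sphere ⟨u, hu⟩), fun v => ?_⟩
  rcases eq_or_ne v 0 with rfl | hv
  · simp [hf0]
  rw [apply_eq_norm_sq_mul_apply_inv_norm_smul hf hv, mul_comm]
  exact mul_le_mul_of_nonneg_left (hmin (by simp [norm_smul, hv])) (by positivity)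

end Homogeneous

namespace Matrix

variable {n : Type*} [Fintype n]

lemma continuous_dotProduct_mulVec_self (A : Matrix n n ℝ) :
    Continuous fun v : n → ℝ => v ⬝ᵥ A *ᵥ v :=
  continuous_id.dotProduct (continuous_const.matrix_mulVec continuous_id)

lemma smul_dotProduct_mulVec_smul (A : Matrix n n ℝ) (a : ℝ) (v : n → ℝ) :
    (a • v) ⬝ᵥ A *ᵥ (a • v) = a ^ 2 * (v ⬝ᵥ A *ᵥ v) := by
  simp only [mulVec_smul, smul_dotProduct, dotProduct_smul, smul_eq_mul]
  ring

lemma PosDef.exists_pos_mul_norm_sq_le {Q : Matrix n n ℝ} (hQ : Q.PosDef) :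
    ∃ c > 0, ∀ v, c * ‖v‖ ^ 2 ≤ v ⬝ᵥ Q *ᵥ v :=
  _root_.exists_pos_mul_norm_sq_le (continuous_dotProduct_mulVec_self Q)
    (smul_dotProduct_mulVec_smul Q) fun v hv => by simpa using hQ.dotProduct_mulVec_pos hv

lemma PosDef.exists_abs_dotProduct_mulVec_le {Q : Matrix n n ℝ} (hQ : Q.PosDef)
    (T : Matrix n n ℝ) : ∃ C, ∀ v, |v ⬝ᵥ T *ᵥ v| ≤ C * (v ⬝ᵥ Q *ᵥ v) := by
  obtain ⟨c, hc, hQc⟩ := hQ.exists_pos_mul_norm_sq_le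
  obtain ⟨K, hK⟩ := exists_abs_le_mul_norm_sq (continuous_dotProduct_mulVec_self T)
    (smul_dotProduct_mulVec_smul T)
  refine ⟨|K| / c, fun v => ?_⟩
  calc |v ⬝ᵥ T *ᵥ v| ≤ |K| * ‖v‖ ^ 2 := (hK v).trans (by gcongr; exact le_abs_self K)
    _ = |K| / c * (c * ‖v‖ ^ 2) := by field_simp
    _ ≤ |K| / c * (v ⬝ᵥ Q *ᵥ v) := by gcongr; exact hQc v

lemma PosDef.eventually_posDef_add_smul {Q T : Matrix n n ℝ} (hQ : Q.PosDef)
    (hT : T.IsHermitian) : ∀ᶠ s in 𝓝 (0 : ℝ), (Q + s • T).PosDef := by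
  obtain ⟨C, hC⟩ := hQ.exists_abs_dotProduct_mulVec_le T
  filter_upwards [eventually_abs_mul_lt C one_pos] with s hs
  refine .of_dotProduct_mulVec_pos (hQ.isHermitian.add (hT.smul (.all s))) fun v hv => ?_
  have hQv : 0 < v ⬝ᵥ Q *ᵥ v := by simpa using hQ.dotProduct_mulVec_pos hv
  have hTv : |s * (v ⬝ᵥ T *ᵥ v)| ≤ |s| * C * (v ⬝ᵥ Q *ᵥ v) := by
    rw [abs_mul, mul_assoc]; exact mul_le_mul_of_nonneg_left (hC v) (abs_nonneg s)
  simp only [star_trivial, add_mulVec, dotProduct_add, smul_mulVec, dotProduct_smul, smul_eq_mul]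
  nlinarith [neg_abs_le (s * (v ⬝ᵥ T *ᵥ v))]

section Det

variable [DecidableEq n]

lemma PosSemidef.one_lt_det_one_add {S : Matrix n n ℝ} (hS : S.PosSemidef) (hS0 : S ≠ 0) :
    1 < (1 + S).det := by
  have hdet : (1 + S).det = ∏ i, (1 + hS.isHermitian.eigenvalues i) := by
    conv_lhs =>
      rw [hS.isHermitian.spectral_theorem, ← map_one (Unitary.conjStarAlgAut ℝ _ _), ← map_add]
    rw [Unitary.conjStarAlgAut_apply, det_mul, det_mul, mul_comm, ← mul_assoc, ← det_mul,
      Unitary.coe_star_mul_self, det_one, one_mul, ← diagonal_one, diagonal_add, det_diagonal]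
    rfl
  obtain ⟨i, hi⟩ := Function.ne_iff.mp (mt hS.isHermitian.eigenvalues_eq_zero_iff.mp hS0)
  rw [hdet]
  simpa using Finset.prod_lt_prod (s := Finset.univ) (f := fun _ => (1 : ℝ)) (fun _ _ => one_pos)
    (fun j _ => by simpa using hS.eigenvalues_nonneg j)
    ⟨i, Finset.mem_univ _, by simpa using lt_of_le_of_ne (hS.eigenvalues_nonneg i) (Ne.symm hi)⟩

open scoped MatrixOrder in
lemma PosDef.det_lt_det_add {A R : Matrix n n ℝ} (hA : A.PosDef) (hR : R.PosSemidef)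
    (hR0 : R ≠ 0) : A.det < (A + R).det := by
  set B := CFC.sqrt A
  have hBB : B * B = A := CFC.sqrt_mul_sqrt_self A hA.posSemidef.nonneg
  have hBt : Bᵀ = B := isHermitian_iff_isSymm.mp (CFC.sqrt_nonneg A).posSemidef.isHermitian
  have hB : IsUnit B.det := isUnit_of_mul_isUnit_left (x := B.det) <| by
    rw [← det_mul, hBB]; exact hA.isUnit.map detMonoidHom
  set S := B⁻¹ * R * B⁻¹
  have hS : S.PosSemidef := by
    simpa [S, transpose_nonsing_inv, hBt] using hR.conjTranspose_mul_mul_same B⁻¹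
  have hBSB : B * S * B = R := by
    rw [mul_assoc, nonsing_inv_mul_cancel_right _ _ hB, mul_nonsing_inv_cancel_left _ _ hB]
  have hS0 : S ≠ 0 := by
    rintro hS0; rw [hS0, mul_zero, zero_mul] at hBSB; exact hR0 hBSB.symm
  have hsum : A + R = B * (1 + S) * B := by rw [mul_add, add_mul, mul_one, hBB, hBSB]
  calc A.det = A.det * 1 := (mul_one _).symm
    _ < A.det * (1 + S).det := mul_lt_mul_of_pos_left (hS.one_lt_det_one_add hS0) hA.det_pos
    _ = (A + R).det := by rw [hsum, ← hBB, det_mul, det_mul, det_mul]; ring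

lemma PosDef.transpose_mul_mul_same_eq_zero_iff {A B : Matrix n n ℝ} (hA : A.PosDef) :
    Bᵀ * A * B = 0 ↔ B = 0 := by
  refine ⟨fun h => ext_iff_mulVec.mpr fun v => ?_, fun h => by simp [h]⟩
  by_contra hv
  have hpos := hA.dotProduct_mulVec_pos (x := B *ᵥ v) (by simpa using hv)
  have hquad : v ⬝ᵥ (Bᵀ * A * B) *ᵥ v = (B *ᵥ v) ⬝ᵥ A *ᵥ (B *ᵥ v) := by
    rw [← mulVec_mulVec, ← mulVec_mulVec, dotProduct_mulVec, vecMul_transpose]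
  rw [star_trivial, ← hquad, h, zero_mulVec, dotProduct_zero] at hpos
  exact hpos.false

lemma PosDef.eventually_det_add_smul_mul_det_add_neg_smul_lt {Q T : Matrix n n ℝ}
    (hQ : Q.PosDef) (hT : T.IsHermitian) (hT0 : T ≠ 0) :
    ∀ᶠ s in 𝓝[≠] (0 : ℝ), (Q + s • T).det * (Q + (-s) • T).det < Q.det ^ 2 := by
  have hTt : Tᵀ = T := isHermitian_iff_isSymm.mp hT
  set S := T * Q⁻¹ * T
  have hS : S.PosSemidef := by simpa [hTt] using hQ.inv.posSemidef.conjTranspose_mul_mul_same T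
  have hS0 : S ≠ 0 := by
    simpa [S, hTt] using (hQ.inv.transpose_mul_mul_same_eq_zero_iff (B := T)).not.mpr hT0
  have hQu : IsUnit Q.det := hQ.det_pos.ne'.isUnit
  have hprod : ∀ s : ℝ, (Q + s • T) * Q⁻¹ * (Q + (-s) • T) = Q + (-s ^ 2) • S := fun s => by
    simp only [S, add_mul, mul_add, smul_mul, Matrix.mul_smul, mul_nonsing_inv _ hQu,
      nonsing_inv_mul_cancel_right _ _ hQu, one_mul, smul_smul]
    module
  have hsmall : ∀ᶠ s in 𝓝 (0 : ℝ), (Q + (-s ^ 2) • S).PosDef :=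
    ((continuous_pow 2).neg.tendsto' (0 : ℝ) 0 (by simp)).eventually
      (hQ.eventually_posDef_add_smul hS.isHermitian)
  filter_upwards [nhdsWithin_le_nhds hsmall, self_mem_nhdsWithin] with s hs hs0
  have hlt := hs.det_lt_det_add (hS.smul (sq_nonneg s)) (smul_ne_zero (pow_ne_zero 2 hs0) hS0)
  rw [neg_smul, neg_add_cancel_right, ← neg_smul, ← hprod, det_mul, det_mul,
    det_nonsing_inv, Ring.inverse_eq_inv] at hlt
  have hQ0 := hQ.det_pos
  calc (Q + s • T).det * (Q + (-s) • T).det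
      = Q.det * ((Q + s • T).det * Q.det⁻¹ * (Q + (-s) • T).det) := by field_simp
    _ < Q.det * Q.det := mul_lt_mul_of_pos_left hlt hQ0
    _ = Q.det ^ 2 := (sq _).symm

end Det

end Matrix

section Lattice

variable {d : ℕ} {Q T : Matrix (Fin d) (Fin d) ℝ} {lam : ℝ}

lemma qeval_add (A B : Matrix (Fin d) (Fin d) ℝ) (x : Fin d → ℤ) :
    qeval (A + B) x = qeval A x + qeval B x := by
  simp [qeval, add_mulVec]

lemma qeval_sub (A B : Matrix (Fin d) (Fin d) ℝ) (x : Fin d → ℤ) :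
    qeval (A - B) x = qeval A x - qeval B x := by
  simp [qeval, sub_mulVec]

lemma qeval_smul (s : ℝ) (A : Matrix (Fin d) (Fin d) ℝ) (x : Fin d → ℤ) :
    qeval (s • A) x = s * qeval A x := by
  simp [qeval, smul_mulVec]

lemma castVec_ne_zero {x : Fin d → ℤ} (hx : x ≠ 0) : castVec x ≠ 0 := by
  contrapose! hx
  funext i
  simpa [castVec] using congrFun hx i

lemma norm_castVec (x : Fin d → ℤ) : ‖castVec x‖ = ‖x‖ := by
  simp only [castVec, Pi.norm_def]
  congr 2

lemma qeval_pos (hQ : Q.PosDef) {x : Fin d → ℤ} (hx : x ≠ 0) : 0 < qeval Q x := by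
  simpa [qeval] using hQ.dotProduct_mulVec_pos (castVec_ne_zero hx)

lemma pos_of_isLeast_qeval (hQ : Q.PosDef)
    (hlam : IsLeast {r : ℝ | ∃ x : Fin d → ℤ, x ≠ 0 ∧ qeval Q x = r} lam) : 0 < lam := by
  obtain ⟨x, hx, rfl⟩ := hlam.1
  exact qeval_pos hQ hx

lemma finite_setOf_qeval_le (hQ : Q.PosDef) (B : ℝ) : {x : Fin d → ℤ | qeval Q x ≤ B}.Finite := by
  obtain ⟨c, hc, hQc⟩ := hQ.exists_pos_mul_norm_sq_le
  refine (isCompact_closedBall (0 : Fin d → ℤ) √(B / c)).finite_of_discrete.subset fun x hx => ?_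
  rw [mem_closedBall_zero_iff, ← norm_castVec]
  refine Real.le_sqrt_of_sq_le ?_
  rw [le_div_iff₀ hc, mul_comm]
  exact (hQc _).trans hx

lemma exists_pos_add_le_qeval (hQ : Q.PosDef)
    (hlam : lam ∈ lowerBounds {r : ℝ | ∃ x : Fin d → ℤ, x ≠ 0 ∧ qeval Q x = r}) :
    ∃ δ > 0, ∀ x : Fin d → ℤ, x ≠ 0 → qeval Q x ≠ lam → lam + δ ≤ qeval Q x := by
  have hfin : ({r : ℝ | ∃ x : Fin d → ℤ, x ≠ 0 ∧ qeval Q x = r} ∩ Set.Iic (lam + 1)).Finite :=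
    ((finite_setOf_qeval_le hQ (lam + 1)).image (qeval Q)).subset
      fun _ ⟨⟨x, _, hx⟩, hle⟩ => ⟨x, show qeval Q x ≤ lam + 1 from hx ▸ hle, hx⟩
  obtain ⟨δ, hδ, hgap⟩ := exists_pos_forall_add_le_of_finite hlam (lt_add_one lam) hfin
  exact ⟨δ, hδ, fun x hx hne => hgap _ ⟨x, hx, rfl⟩ hne⟩

lemma eventually_isLeast_qeval_add_smul (hQ : Q.PosDef)
    (hlam : IsLeast {r : ℝ | ∃ x : Fin d → ℤ, x ≠ 0 ∧ qeval Q x = r} lam)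
    (hT : ∀ x, qeval Q x = lam → qeval T x = 0) :
    ∀ᶠ s in 𝓝 (0 : ℝ),
      IsLeast {r : ℝ | ∃ x : Fin d → ℤ, x ≠ 0 ∧ qeval (Q + s • T) x = r} lam := by
  obtain ⟨δ, hδ, hgap⟩ := exists_pos_add_le_qeval hQ hlam.2
  obtain ⟨C, hC⟩ := hQ.exists_abs_dotProduct_mulVec_le T
  have hlam0 := pos_of_isLeast_qeval hQ hlam
  filter_upwards [eventually_abs_mul_lt C (div_pos hδ (add_pos hlam0 hδ))] with s hs
  rw [lt_div_iff₀ (add_pos hlam0 hδ)] at hs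
  refine ⟨?_, ?_⟩
  · obtain ⟨x, hx, hxlam⟩ := hlam.1
    exact ⟨x, hx, by rw [qeval_add, qeval_smul, hT x hxlam, hxlam, mul_zero, add_zero]⟩
  rintro _ ⟨x, hx, rfl⟩
  rw [qeval_add, qeval_smul]
  by_cases hxlam : qeval Q x = lam
  · rw [hT x hxlam, hxlam, mul_zero, add_zero]
  have hge := hgap x hx hxlam
  have hTx : |s * qeval T x| ≤ |s| * C * qeval Q x := by
    rw [abs_mul, mul_assoc]; exact mul_le_mul_of_nonneg_left (hC _) (abs_nonneg s)
  nlinarith [neg_abs_le (s * qeval T x)]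

end Lattice

/-- Every positive definite quadratic form attaining Hermite's constant, i.e.
maximizing the Hermite invariant `λ(Q)/(det Q)^(1/d)` among all positive
definite forms, is perfect. -/
theorem stmt14 (d : ℕ) (hd : 1 ≤ d) (Q : Matrix (Fin d) (Fin d) ℝ) (lam : ℝ)
    (hQ : Q.PosDef)
    (hlam : IsLeast {r : ℝ | ∃ x : Fin d → ℤ, x ≠ 0 ∧ qeval Q x = r} lam)
    (hmax : ∀ (Q' : Matrix (Fin d) (Fin d) ℝ) (lam' : ℝ), Q'.PosDef →
      IsLeast {r : ℝ | ∃ x : Fin d → ℤ, x ≠ 0 ∧ qeval Q' x = r} lam' →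
      lam' / Q'.det ^ ((1 : ℝ) / d) ≤ lam / Q.det ^ ((1 : ℝ) / d)) :
    IsPerfect Q lam := by
  refine ⟨hQ, hlam, fun Q' hQ' hagree => ?_⟩
  by_contra hne
  set T := Q' - Q
  have hT : T.IsHermitian :=
    isHermitian_iff_isSymm.mpr (hQ'.sub (isHermitian_iff_isSymm.mp hQ.isHermitian))
  have hTmin : ∀ x, qeval Q x = lam → qeval T x = 0 := fun x hx => by
    rw [qeval_sub, hagree x hx, hx, sub_self]
  have hdet : ∀ s : ℝ, (Q + s • T).PosDef →
      IsLeast {r : ℝ | ∃ x : Fin d → ℤ, x ≠ 0 ∧ qeval (Q + s • T) x = r} lam →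
      Q.det ≤ (Q + s • T).det := fun s hs hmin =>
    le_of_div_rpow_le_div_rpow hQ.det_pos hs.det_pos (pos_of_isLeast_qeval hQ hlam)
      (by positivity) (hmax _ _ hs hmin)
  have hgood :=
    (hQ.eventually_posDef_add_smul hT).and (eventually_isLeast_qeval_add_smul hQ hlam hTmin)
  have hgood_neg := (continuous_neg.tendsto' (0 : ℝ) 0 neg_zero).eventually hgood
  obtain ⟨s, ⟨⟨hpos, hmin⟩, hpos', hmin'⟩, hlt⟩ :=
    (((hgood.and hgood_neg).filter_mono nhdsWithin_le_nhds).and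
      (hQ.eventually_det_add_smul_mul_det_add_neg_smul_lt hT (sub_ne_zero.mpr hne))).exists
  have h₁ := hdet s hpos hmin
  have h₂ := hdet (-s) hpos' hmin'
  exact hlt.not_ge (by rw [sq]; exact mul_le_mul h₁ h₂ hQ.det_pos.le (hQ.det_pos.le.trans h₁))
end
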